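/- Let M be a W*-bundle over a compact Hausdorff space X and (B,p) its topological bundle. Then the restriction of p to the unit ball B_{≤1} = {b ∈ B : ‖b‖ ≤ 1} is an open map B_{≤1} → X, and consequently p : B → X itself is a continuous open surjection. -/

import Mathlib

/-!
For each `x`, `⟨a, b⟩ = E(a* b)(x)` is a semi-inner product on `M`, and its seminorm `p_x` is
what the basic sets `V(a, ε, U)` measure. Hence every `a ∈ M` gives a continuous section
`x ↦ [a]_x` of `B`, and an open set `W ∋ [c]_x` contains `[c']_x` for all `c'` in a `p_x`-ball
around `c`; the section through such a `c'` then stays in `W` near `x`. This already makes `p`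
open. If moreover `‖[c]_x‖ ≤ 1`, pick a representative `c - j` (with `p_x j = 0`) of norm
`< 1/t` for some `t < 1` close to `1`; then `a = t • (c - j)` has `‖a‖ ≤ 1` and lies in that
ball, and its section stays in `B_{≤1}`. This approximate lift replaces the exact
norm-preserving lift from C*-quotients.
-/

/-- Fibre equivalence: `a ~ b` in the fibre over `x` iff `E((a-b)*(a-b))(x) = 0`. -/
def fibRel {X M : Type*} [TopologicalSpace X] [CompactSpace X] [NormedRing M] [StarRing M]
    [NormedAlgebra ℂ M] (E : M →ₗ[ℂ] C(X, ℂ)) (x : X) (a b : M) : Prop :=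
  E (star (a - b) * (a - b)) x = 0

/-- The total space `B = ⨆_{x ∈ X} M_x` of the topological bundle of a W*-bundle. -/
def WTotalSpace {X M : Type*} [TopologicalSpace X] [CompactSpace X] [NormedRing M] [StarRing M]
    [NormedAlgebra ℂ M] (E : M →ₗ[ℂ] C(X, ℂ)) : Type _ :=
  Σ x : X, Quot (fibRel E x)

/-- The basic set `V(a, ε, U)`. -/
def Vset {X M : Type*} [TopologicalSpace X] [CompactSpace X] [NormedRing M] [StarRing M]
    [NormedAlgebra ℂ M] (E : M →ₗ[ℂ] C(X, ℂ)) (a : M) (ε : ℝ) (U : Set X) :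
    Set (WTotalSpace E) :=
  {b | b.1 ∈ U ∧ ∃ c : M, Quot.mk (fibRel E b.1) c = b.2 ∧
    Real.sqrt ((E (star (a - c) * (a - c)) b.1).re) < ε}

/-- The collection of basic sets. -/
def VBasis {X M : Type*} [TopologicalSpace X] [CompactSpace X] [NormedRing M] [StarRing M]
    [NormedAlgebra ℂ M] (E : M →ₗ[ℂ] C(X, ℂ)) : Set (Set (WTotalSpace E)) :=
  {V | ∃ (a : M) (ε : ℝ) (U : Set X), 0 < ε ∧ IsOpen U ∧ V = Vset E a ε U}

/-- The bundle topology on the total space. -/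
def bundleTopology {X M : Type*} [TopologicalSpace X] [CompactSpace X] [NormedRing M]
    [StarRing M] [NormedAlgebra ℂ M] (E : M →ₗ[ℂ] C(X, ℂ)) :
    TopologicalSpace (WTotalSpace E) :=
  TopologicalSpace.generateFrom (VBasis E)

/-- The combined fibre C*-norm `‖·‖ : B → ℝ` (the quotient norm, computed via a choice of
representative). -/
noncomputable def cnB {X M : Type*} [TopologicalSpace X] [CompactSpace X] [NormedRing M]
    [StarRing M] [NormedAlgebra ℂ M] (E : M →ₗ[ℂ] C(X, ℂ)) (b : WTotalSpace E) : ℝ :=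
  sInf {r : ℝ | ∃ j : M, E (star j * j) b.1 = 0 ∧ r = ‖Quot.out b.2 - j‖}

open Filter Topology

section FibreSeminorm

variable {X M : Type*} [TopologicalSpace X] [NormedRing M] [StarRing M] [NormedAlgebra ℂ M]
  [StarModule ℂ M] (E : M →ₗ[ℂ] C(X, ℂ))
  (hpos : ∀ (a : M) (x : X), 0 ≤ (E (star a * a) x).re ∧ (E (star a * a) x).im = 0)
  (hstar : ∀ a : M, E (star a) = star (E a))

noncomputable abbrev fibreInnerCore (x : X) : PreInnerProductSpace.Core ℂ M where
  inner a b := E (star a * b) x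
  conj_inner_symm a b := by
    simpa [star_mul] using (congrArg (· x) (hstar (star b * a))).symm
  re_inner_nonneg a := (hpos a x).1
  add_left a b c := by simp [add_mul]
  smul_left a b r := by simp [star_smul]

-- `M` already carries its C*-norm, so the norm induced by the semi-inner product is passed
-- explicitly.
noncomputable def fibreSeminorm (x : X) : Seminorm ℂ M :=
  let c := fibreInnerCore E hpos hstar x
  have core := InnerProductSpace.Core.toSeminormedSpaceCore c
  Seminorm.of (fun a => √(E (star a * a) x).re)
    (@SeminormedSpace.Core.norm_triangle _ _ _ _ (InnerProductSpace.Core.toNorm (c := c)) _ core)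
    (@SeminormedSpace.Core.norm_smul _ _ _ _ (InnerProductSpace.Core.toNorm (c := c)) _ core)

@[simp]
theorem fibreSeminorm_apply (x : X) (a : M) :
    fibreSeminorm E hpos hstar x a = √(E (star a * a) x).re :=
  rfl

theorem fibreSeminorm_eq_zero_iff (x : X) (a : M) :
    fibreSeminorm E hpos hstar x a = 0 ↔ E (star a * a) x = 0 := by
  rw [fibreSeminorm_apply, Real.sqrt_eq_zero (hpos a x).1, Complex.ext_iff]
  simp [(hpos a x).2]

theorem continuous_fibreSeminorm_apply (a : M) :
    Continuous fun x => fibreSeminorm E hpos hstar x a := by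
  simp only [fibreSeminorm_apply]
  fun_prop

end FibreSeminorm

theorem map_sub_eq_map_sub_of_map_sub_eq_zero {F α : Type*} [AddCommGroup α] [FunLike F α ℝ]
    [AddGroupSeminormClass F α ℝ] (f : F) {c c' : α} (h : f (c - c') = 0) (a : α) :
    f (a - c) = f (a - c') := by
  have := abs_sub_map_le_sub f (a - c) (a - c')
  rwa [sub_sub_sub_cancel_left, map_sub_rev f c', h, abs_nonpos_iff, sub_eq_zero] at this

section Bundle

variable {X M : Type*} [TopologicalSpace X] [CompactSpace X] [NormedRing M] [StarRing M]
  [NormedAlgebra ℂ M] (E : M →ₗ[ℂ] C(X, ℂ))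

attribute [local instance] bundleTopology

def bundleSection (a : M) (x : X) : WTotalSpace E :=
  ⟨x, Quot.mk _ a⟩

theorem bundleSection_out (b : WTotalSpace E) : bundleSection E (Quot.out b.2) b.1 = b :=
  Sigma.ext rfl (heq_of_eq (Quot.out_eq _))

theorem continuous_wTotalSpace_fst : Continuous fun b : WTotalSpace E => b.1 := by
  refine continuous_def.mpr fun U hU => ?_
  have hpre : (fun b : WTotalSpace E => b.1) ⁻¹' U = ⋃ c : M, Vset E c 1 U := by
    ext b
    refine ⟨fun hb => Set.mem_iUnion.mpr
      ⟨Quot.out b.2, hb, Quot.out b.2, Quot.out_eq _, by simp⟩, fun hb => ?_⟩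
    obtain ⟨c, hbU, -⟩ := Set.mem_iUnion.mp hb
    exact hbU
  rw [hpre]
  exact isOpen_iUnion fun c => .basic _ ⟨c, 1, U, one_pos, hU, rfl⟩

variable [StarModule ℂ M]
  (hpos : ∀ (a : M) (x : X), 0 ≤ (E (star a * a) x).re ∧ (E (star a * a) x).im = 0)
  (hstar : ∀ a : M, E (star a) = star (E a))

theorem fibRel_iff (x : X) (a b : M) :
    fibRel E x a b ↔ fibreSeminorm E hpos hstar x (a - b) = 0 :=
  (fibreSeminorm_eq_zero_iff E hpos hstar x (a - b)).symm

include hpos hstar in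
theorem fibRel_equivalence (x : X) : Equivalence (fibRel E x) := by
  refine ⟨fun a => ?_, fun h => ?_, fun hab hbc => ?_⟩ <;> rw [fibRel_iff E hpos hstar] at *
  · simp
  · rwa [map_sub_rev]
  · rwa [← map_sub_eq_map_sub_of_map_sub_eq_zero _ hbc]

include hpos hstar in
theorem fibRel_of_mk_eq {x : X} {a b : M}
    (h : Quot.mk (fibRel E x) a = Quot.mk (fibRel E x) b) : fibRel E x a b :=
  (fibRel_equivalence E hpos hstar x).eqvGen_iff.mp (Quot.eqvGen_exact h)

theorem bundleSection_mem_Vset_iff {a c : M} {ε : ℝ} {U : Set X} {x : X} :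
    bundleSection E c x ∈ Vset E a ε U ↔
      x ∈ U ∧ c ∈ (fibreSeminorm E hpos hstar x).ball a ε := by
  rw [Seminorm.mem_ball, map_sub_rev]
  refine and_congr_right fun _ => ⟨?_, fun h => ⟨c, rfl, h⟩⟩
  rintro ⟨c₀, hc₀, hlt⟩
  have h0 := (fibRel_iff E hpos hstar x c₀ c).mp (fibRel_of_mk_eq E hpos hstar hc₀)
  rwa [← map_sub_eq_map_sub_of_map_sub_eq_zero _ h0]

include hpos hstar in
theorem continuous_bundleSection (c : M) : Continuous (bundleSection E c) := by
  refine continuous_generateFrom_iff.mpr ?_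
  rintro _ ⟨a, ε, U, -, hU, rfl⟩
  have hpre : bundleSection E c ⁻¹' Vset E a ε U =
      U ∩ {x | fibreSeminorm E hpos hstar x (c - a) < ε} := by
    ext x
    exact bundleSection_mem_Vset_iff E hpos hstar
  rw [hpre]
  exact hU.inter (isOpen_lt (continuous_fibreSeminorm_apply E hpos hstar _) continuous_const)

theorem exists_ball_subset_of_isOpen {W : Set (WTotalSpace E)} (hW : IsOpen W) {c : M} {x : X}
    (hc : bundleSection E c x ∈ W) :
    ∃ δ > 0, ∀ c' ∈ (fibreSeminorm E hpos hstar x).ball c δ,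
      bundleSection E c' x ∈ W := by
  set p := fibreSeminorm E hpos hstar x
  replace hW : TopologicalSpace.GenerateOpen (VBasis E) W := hW
  induction hW generalizing c with
  | basic V hV =>
    obtain ⟨a, ε, U, -, -, rfl⟩ := hV
    obtain ⟨hxU, hca⟩ := (bundleSection_mem_Vset_iff E hpos hstar).mp hc
    rw [Seminorm.mem_ball] at hca
    refine ⟨ε - p (c - a), sub_pos.mpr hca, fun c' hc' =>
      (bundleSection_mem_Vset_iff E hpos hstar).mpr ⟨hxU, ?_⟩⟩
    rw [Seminorm.mem_ball] at hc' ⊢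
    calc p (c' - a) = p ((c' - c) + (c - a)) := by rw [sub_add_sub_cancel]
      _ ≤ p (c' - c) + p (c - a) := map_add_le_add _ _ _
      _ < ε := by linarith
  | univ => exact ⟨1, one_pos, fun _ _ => trivial⟩
  | inter W₁ W₂ _ _ ih₁ ih₂ =>
    obtain ⟨δ₁, hδ₁, h₁⟩ := ih₁ hc.1
    obtain ⟨δ₂, hδ₂, h₂⟩ := ih₂ hc.2
    exact ⟨min δ₁ δ₂, lt_min hδ₁ hδ₂, fun c' hc' =>
      ⟨h₁ c' (Seminorm.ball_mono (min_le_left _ _) hc'),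
        h₂ c' (Seminorm.ball_mono (min_le_right _ _) hc')⟩⟩
  | sUnion S _ ih =>
    obtain ⟨V, hVS, hcV⟩ := hc
    obtain ⟨δ, hδ, h⟩ := ih V hVS hcV
    exact ⟨δ, hδ, fun c' hc' => ⟨V, hVS, h c' hc'⟩⟩

include hpos hstar in
theorem cnB_bundleSection_le (a : M) (x : X) : cnB E (bundleSection E a x) ≤ ‖a‖ := by
  have hrel : fibRel E x (Quot.out (Quot.mk (fibRel E x) a)) a :=
    fibRel_of_mk_eq E hpos hstar (Quot.out_eq _)
  refine csInf_le ⟨0, ?_⟩ ⟨_, hrel, by rw [bundleSection, sub_sub_cancel]⟩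
  rintro _ ⟨j, -, rfl⟩
  exact norm_nonneg _

theorem exists_norm_le_one_mem_ball {b : WTotalSpace E} (hb : cnB E b ≤ 1) {δ : ℝ}
    (hδ : 0 < δ) :
    ∃ a : M, ‖a‖ ≤ 1 ∧ a ∈ (fibreSeminorm E hpos hstar b.1).ball (Quot.out b.2) δ := by
  set p := fibreSeminorm E hpos hstar b.1
  set c := Quot.out b.2
  obtain ⟨t, ⟨ht0, ht1⟩, hts⟩ : ∃ t ∈ Set.Ioo (0 : ℝ) 1, (1 - t) * p c < δ := by
    have hlim : Tendsto (fun t : ℝ => (1 - t) * p c) (𝓝[<] 1) (𝓝 0) := by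
      refine tendsto_nhdsWithin_of_tendsto_nhds ?_
      have hcont : Continuous fun t : ℝ => (1 - t) * p c := by fun_prop
      simpa using hcont.tendsto 1
    have hIoo : ∀ᶠ t in 𝓝[<] (1 : ℝ), t ∈ Set.Ioo 0 1 := Ioo_mem_nhdsLT one_pos
    exact (hIoo.and (hlim.eventually (gt_mem_nhds hδ))).exists
  obtain ⟨a, hca, ha⟩ : ∃ a : M, p (c - a) = 0 ∧ ‖a‖ < t⁻¹ := by
    have hne : {r : ℝ | ∃ j : M, E (star j * j) b.1 = 0 ∧ r = ‖c - j‖}.Nonempty :=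
      ⟨_, 0, by simp, rfl⟩
    obtain ⟨_, ⟨j, hj, rfl⟩, hlt⟩ :=
      exists_lt_of_csInf_lt hne (hb.trans_lt ((one_lt_inv₀ ht0).mpr ht1))
    exact ⟨c - j, by rwa [sub_sub_cancel, fibreSeminorm_eq_zero_iff], hlt⟩
  refine ⟨(t : ℂ) • a, ?_, ?_⟩
  · rw [norm_smul, Complex.norm_real, Real.norm_of_nonneg ht0.le]
    calc t * ‖a‖ ≤ t * t⁻¹ := by gcongr
      _ = 1 := mul_inv_cancel₀ ht0.ne'
  · have hpa : p a = p c := by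
      simpa using (map_sub_eq_map_sub_of_map_sub_eq_zero p hca 0).symm
    have hnorm : ‖(t : ℂ) - 1‖ = 1 - t := by
      rw [← Complex.ofReal_one, ← Complex.ofReal_sub, Complex.norm_real, Real.norm_of_nonpos
        (by linarith), neg_sub]
    rw [Seminorm.mem_ball]
    calc p ((t : ℂ) • a - c) = p (((t : ℂ) - 1) • a) := by
          rw [map_sub_eq_map_sub_of_map_sub_eq_zero p hca, sub_smul, one_smul]
      _ = (1 - t) * p c := by rw [map_smul_eq_mul, hnorm, hpa]
      _ < δ := hts

include hpos hstar in
theorem isOpenMap_wTotalSpace_fst : IsOpenMap fun b : WTotalSpace E => b.1 := by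
  refine fun W hW => isOpen_iff_forall_mem_open.mpr ?_
  rintro _ ⟨b, hbW, rfl⟩
  refine ⟨bundleSection E (Quot.out b.2) ⁻¹' W, fun x hx => ⟨_, hx, rfl⟩,
    (continuous_bundleSection E hpos hstar _).isOpen_preimage W hW, ?_⟩
  rwa [Set.mem_preimage, bundleSection_out]

include hpos hstar in
theorem isOpen_fst_image_inter_cnB_le_one {W : Set (WTotalSpace E)} (hW : IsOpen W) :
    IsOpen ((fun b : WTotalSpace E => b.1) '' (W ∩ {b | cnB E b ≤ 1})) := by
  refine isOpen_iff_forall_mem_open.mpr ?_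
  rintro _ ⟨b, ⟨hbW, hb⟩, rfl⟩
  obtain ⟨δ, hδ, hball⟩ := exists_ball_subset_of_isOpen E hpos hstar hW
    (c := Quot.out b.2) (x := b.1) (by rwa [bundleSection_out])
  obtain ⟨a, ha1, ha⟩ := exists_norm_le_one_mem_ball E hpos hstar hb hδ
  exact ⟨bundleSection E a ⁻¹' W,
    fun x hx => ⟨_, ⟨hx, (cnB_bundleSection_le E hpos hstar a x).trans ha1⟩, rfl⟩,
    (continuous_bundleSection E hpos hstar a).isOpen_preimage W hW, hball a ha⟩

end Bundle

theorem stmt15_general {X M : Type*} [TopologicalSpace X] [CompactSpace X]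
    [NormedRing M] [StarRing M] [NormedAlgebra ℂ M]
    [StarModule ℂ M]
    (E : M →ₗ[ℂ] C(X, ℂ))
    (hpos : ∀ (a : M) (x : X), 0 ≤ (E (star a * a) x).re ∧ (E (star a * a) x).im = 0)
    (hstar : ∀ a : M, E (star a) = star (E a)) :
    -- p restricted to the unit ball is open
    (∀ W : Set (WTotalSpace E), (bundleTopology E).IsOpen W →
      IsOpen ((fun b : WTotalSpace E => b.1) '' (W ∩ {b | cnB E b ≤ 1}))) ∧
    -- p is continuous
    (@Continuous _ _ (bundleTopology E) _ (fun b : WTotalSpace E => b.1)) ∧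
    -- p is open
    (∀ W : Set (WTotalSpace E), (bundleTopology E).IsOpen W →
      IsOpen ((fun b : WTotalSpace E => b.1) '' W)) ∧
    -- p is surjective
    Function.Surjective (fun b : WTotalSpace E => b.1) := by
  exact ⟨fun _ hW => isOpen_fst_image_inter_cnB_le_one E hpos hstar hW,
    continuous_wTotalSpace_fst E, fun W hW => isOpenMap_wTotalSpace_fst E hpos hstar W hW,
    fun x => ⟨bundleSection E 0 x, rfl⟩⟩

/-- on the topological bundle `(B,p)` of a W*-bundle, the projection `p`
restricted to the C*-norm unit ball `B_{≤1}` is an open map onto `X`, and consequently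
`p : B → X` itself is a continuous open surjection. -/
theorem stmt15 {X M : Type*} [TopologicalSpace X] [CompactSpace X] [T2Space X]
    [NormedRing M] [StarRing M] [CStarRing M] [NormedAlgebra ℂ M]
    [StarModule ℂ M] [CompleteSpace M]
    (E : M →ₗ[ℂ] C(X, ℂ))
    (hE1 : E 1 = 1)
    (htr : ∀ a b : M, E (a * b) = E (b * a))
    (hpos : ∀ (a : M) (x : X), 0 ≤ (E (star a * a) x).re ∧ (E (star a * a) x).im = 0)
    (hstar : ∀ a : M, E (star a) = star (E a))
    (hfaith : ∀ a : M, E (star a * a) = 0 → a = 0)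
    (hcontr : ∀ a : M, ‖E a‖ ≤ ‖a‖) :
    -- p restricted to the unit ball is open
    (∀ W : Set (WTotalSpace E), (bundleTopology E).IsOpen W →
      IsOpen ((fun b : WTotalSpace E => b.1) '' (W ∩ {b | cnB E b ≤ 1}))) ∧
    -- p is continuous
    (@Continuous _ _ (bundleTopology E) _ (fun b : WTotalSpace E => b.1)) ∧
    -- p is open
    (∀ W : Set (WTotalSpace E), (bundleTopology E).IsOpen W →
      IsOpen ((fun b : WTotalSpace E => b.1) '' W)) ∧
    -- p is surjective
    Function.Surjective (fun b : WTotalSpace E => b.1) :=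
  stmt15_general E hpos hstar
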